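/- Let F be a field of characteristic ≠ 2 and ρ ∈ F with ρ ≠ 0 and ρ ≠ −2. Then the algebras C(ρ) and J₂ are isotopic. -/

import Mathlib

open Module

section Defs

variable (F : Type*) [Field F]

/-- `I` is a (two-sided) ideal of the algebra `(A, mul)`. -/
def IsIdeal {A : Type*} [AddCommGroup A] [Module F A]
    (mul : A → A → A) (I : Submodule F A) : Prop :=
  ∀ a : A, ∀ u ∈ I, mul a u ∈ I ∧ mul u a ∈ I

/-- The (not necessarily associative or unital) algebra `(A, mul)` is simple:
its multiplication is nonzero and its only ideals are `⊥` and `⊤`. -/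
def IsSimpleAlg {A : Type*} [AddCommGroup A] [Module F A]
    (mul : A → A → A) : Prop :=
  (∃ u v : A, mul u v ≠ 0) ∧
  ∀ I : Submodule F A, IsIdeal F mul I → I = ⊥ ∨ I = ⊤

/-- The algebra `(A, mul)` has nil-rank `k`: there are `k` linearly independent
nil-elements of index 2, but no `k + 1` such elements. -/
def HasNilRank {A : Type*} [AddCommGroup A] [Module F A]
    (mul : A → A → A) (k : ℕ) : Prop :=
  (∃ v : Fin k → A, LinearIndependent F v ∧ ∀ i, mul (v i) (v i) = 0) ∧
  ∀ v : Fin (k + 1) → A, LinearIndependent F v → ∃ i, mul (v i) (v i) ≠ 0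

/-- The algebras `(A, mulA)` and `(B, mulB)` are isomorphic. -/
def AlgIso {A B : Type*} [AddCommGroup A] [Module F A] [AddCommGroup B] [Module F B]
    (mulA : A → A → A) (mulB : B → B → B) : Prop :=
  ∃ φ : A ≃ₗ[F] B, ∀ u v : A, φ (mulA u v) = mulB (φ u) (φ v)

/-- The algebras `(A, mulA)` and `(B, mulB)` are isotopic. -/
def Isotopic {A B : Type*} [AddCommGroup A] [Module F A] [AddCommGroup B] [Module F B]
    (mulA : A → A → A) (mulB : B → B → B) : Prop :=
  ∃ φ ψ ξ : A ≃ₗ[F] B, ∀ u v : A, mulB (φ u) (ψ v) = ξ (mulA u v)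

/-- `(e, x, y)` is a canonical basis of `A` realizing the unital commutative algebra
`C(α, β, γ)`: `e` is a multiplicative identity, `x² = y² = 0`,
and `xy = yx = α·1 + β·x + γ·y`. (`C(1,0,0)` is the Jordan algebra `J₂`.) -/
def IsCAlg {A : Type*} [AddCommGroup A] [Module F A]
    (m : A →ₗ[F] A →ₗ[F] A) (α β γ : F) (e x y : A) : Prop :=
  LinearIndependent F ![e, x, y] ∧
  Submodule.span F {e, x, y} = ⊤ ∧
  (∀ u, m e u = u) ∧ (∀ u, m u e = u) ∧
  m x x = 0 ∧ m y y = 0 ∧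
  m x y = α • e + β • x + γ • y ∧ m y x = α • e + β • x + γ • y

end Defs

/-!
In `C(ρ)` put `E = 2 + x + y`, `X = x`, `Y = κ y` with `κ = 2(ρ + 2)/ρ`. Then `X² = Y² = 0` and
`XY = E² = 2(ρ + 2)(1 + x + y)`, so `(E, X, Y)` multiplies like the basis `(1, x, y)` of `J₂`
once `1, x, y` are replaced by `E², EX, EY`; these three products are again a basis because
their determinant with respect to `(1, x, y)` is `8(ρ + 2)κ ≠ 0`. Hence `φ = ψ` sending
`(E, X, Y)` to `(1, x, y)` and `ξ` sending `(E², EX, EY)` to `(1, x, y)` is an isotopy.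
-/

section JordanFrame

open Submodule Set

variable {F A B : Type*} [Field F] [AddCommGroup A] [Module F A] [AddCommGroup B] [Module F B]

/-- `(E, X, Y)` is a basis on which `m` has the multiplication table of the basis `(1, x, y)` of
`J₂`, with the second basis `(E², EX, EY)` in place of `(1, x, y)` among the products. -/
structure IsJordanFrame (m : A →ₗ[F] A →ₗ[F] A) (E X Y : A) : Prop where
  isBasis : LinearIndependent F ![E, X, Y] ∧ span F (range ![E, X, Y]) = ⊤
  isBasis_mul : LinearIndependent F ![m E E, m E X, m E Y] ∧
    span F (range ![m E E, m E X, m E Y]) = ⊤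
  mul_X_X : m X X = 0
  mul_Y_Y : m Y Y = 0
  mul_X_Y : m X Y = m E E
  mul_Y_X : m Y X = m E E
  mul_X_E : m X E = m E X
  mul_Y_E : m Y E = m E Y

theorem exists_linearEquiv_fin_three {u v w : A} {u' v' w' : B}
    (h : LinearIndependent F ![u, v, w] ∧ span F (range ![u, v, w]) = ⊤)
    (h' : LinearIndependent F ![u', v', w'] ∧ span F (range ![u', v', w']) = ⊤) :
    ∃ φ : A ≃ₗ[F] B, φ u = u' ∧ φ v = v' ∧ φ w = w' := by
  let b := Basis.mk h.1 h.2.ge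
  let b' := Basis.mk h'.1 h'.2.ge
  have hb (i : Fin 3) : b.equiv b' (Equiv.refl _) (![u, v, w] i) = ![u', v', w'] i := by
    simpa only [b, b', Basis.mk_apply, Equiv.refl_apply] using b.equiv_apply i b' (Equiv.refl _)
  exact ⟨b.equiv b' (Equiv.refl _), hb 0, hb 1, hb 2⟩

/-- Isotopy matches the frames as inputs and their product bases as outputs. -/
theorem IsJordanFrame.isotopic {m : A →ₗ[F] A →ₗ[F] A} {E X Y : A}
    {m' : B →ₗ[F] B →ₗ[F] B} {E' X' Y' : B}
    (hA : IsJordanFrame m E X Y) (hB : IsJordanFrame m' E' X' Y') :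
    Isotopic F (fun u v : A => m u v) (fun u v : B => m' u v) := by
  obtain ⟨φ, hφE, hφX, hφY⟩ := exists_linearEquiv_fin_three hA.isBasis hB.isBasis
  obtain ⟨ξ, hξE, hξX, hξY⟩ := exists_linearEquiv_fin_three hA.isBasis_mul hB.isBasis_mul
  refine ⟨φ, φ, ξ, fun u v => ?_⟩
  suffices m'.compl₁₂ φ.toLinearMap φ.toLinearMap = m.compr₂ ξ.toLinearMap from
    congr($this u v)
  refine LinearMap.ext_basis (Basis.mk hA.isBasis.1 hA.isBasis.2.ge)
    (Basis.mk hA.isBasis.1 hA.isBasis.2.ge) fun i j => ?_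
  fin_cases i <;> fin_cases j <;>
    simp [hφE, hφX, hφY, hξE, hξX, hξY, hA.mul_X_X, hA.mul_Y_Y, hA.mul_X_Y,
      hA.mul_Y_X, hA.mul_X_E, hA.mul_Y_E, hB.mul_X_X, hB.mul_Y_Y, hB.mul_X_Y,
      hB.mul_Y_X, hB.mul_X_E, hB.mul_Y_E]

end JordanFrame

namespace IsCAlg

open Submodule Set

variable {F A : Type*} [Field F] [AddCommGroup A] [Module F A] {m : A →ₗ[F] A →ₗ[F] A}
  {α β γ : F} {e x y : A}

theorem isBasis (h : IsCAlg F m α β γ e x y) :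
    LinearIndependent F ![e, x, y] ∧ span F (range ![e, x, y]) = ⊤ := by
  rw [Matrix.range_cons, Matrix.range_cons_cons_empty, Set.singleton_union]
  exact ⟨h.1, h.2.1⟩

noncomputable def basis (h : IsCAlg F m α β γ e x y) : Basis (Fin 3) F A :=
  Basis.mk h.isBasis.1 h.isBasis.2.ge

@[simp] theorem basis_apply (h : IsCAlg F m α β γ e x y) (i : Fin 3) :
    h.basis i = ![e, x, y] i :=
  Basis.mk_apply ..

theorem mul_comm (h : IsCAlg F m α β γ e x y) (u v : A) : m u v = m v u := by
  suffices m = m.flip from congr($this u v)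
  refine LinearMap.ext_basis h.basis h.basis fun i j => ?_
  simp only [basis_apply, LinearMap.flip_apply]
  obtain ⟨-, -, he, he', -, -, hxy, hyx⟩ := h
  fin_cases i <;> fin_cases j <;> simp [he, he', hxy, hyx]

theorem repr_basis (h : IsCAlg F m α β γ e x y) :
    h.basis.repr e = Finsupp.single 0 1 ∧ h.basis.repr x = Finsupp.single 1 1 ∧
      h.basis.repr y = Finsupp.single 2 1 := by
  have hrepr (i : Fin 3) : h.basis.repr (![e, x, y] i) = Finsupp.single i 1 := by
    simpa using h.basis.repr_self i
  exact ⟨hrepr 0, hrepr 1, hrepr 2⟩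

theorem isJordanFrame_of_one_zero_zero (h : IsCAlg F m 1 0 0 e x y) : IsJordanFrame m e x y := by
  have ⟨_, _, he, he', hxx, hyy, hxy, hyx⟩ := h
  refine ⟨h.isBasis, by simpa only [he] using h.isBasis, hxx, hyy, ?_, ?_, ?_, ?_⟩ <;>
    simp [he, he', hxy, hyx]

theorem isJordanFrame_of_const {ρ : F} (h : IsCAlg F m ρ ρ ρ e x y) (h2 : (2 : F) ≠ 0)
    (hρ0 : ρ ≠ 0) (hρ2 : ρ + 2 ≠ 0) :
    IsJordanFrame m ((2 : F) • e + x + y) x ((2 * (ρ + 2) / ρ) • y) := by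
  set κ := 2 * (ρ + 2) / ρ
  have hκρ : κ * ρ = 2 * (ρ + 2) := div_mul_cancel₀ _ hρ0
  have ⟨_, _, he1, he1', hxx, hyy, hxy, hyx⟩ := h
  have hEE : m ((2 : F) • e + x + y) ((2 : F) • e + x + y) = (2 * (ρ + 2)) • (e + x + y) := by
    simp only [map_add, map_smul, LinearMap.add_apply, LinearMap.smul_apply, he1, he1', hxx,
      hyy, hxy, hyx]
    module
  have hEX : m ((2 : F) • e + x + y) x = ρ • e + (ρ + 2) • x + ρ • y := by
    simp only [map_add, map_smul, LinearMap.add_apply, LinearMap.smul_apply, he1, hxx, hyx]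
    module
  have hEY : m ((2 : F) • e + x + y) (κ • y) = κ • (ρ • e + ρ • x + (ρ + 2) • y) := by
    simp only [map_add, map_smul, LinearMap.add_apply, LinearMap.smul_apply, he1, hyy, hxy]
    module
  have hXY : m x (κ • y) = m ((2 : F) • e + x + y) ((2 : F) • e + x + y) := by
    rw [hEE, map_smul, hxy, ← hκρ]
    module
  have hκ0 : κ ≠ 0 := div_ne_zero (mul_ne_zero h2 hρ2) hρ0
  obtain ⟨he, hx, hy⟩ := h.repr_basis
  refine ⟨?_, ?_, hxx, by simp [hyy], hXY, by rw [h.mul_comm, hXY], h.mul_comm _ _,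
    h.mul_comm _ _⟩
  · refine h.basis.is_basis_iff_det.mpr (isUnit_iff_ne_zero.mpr ?_)
    simp [Basis.det_apply, Matrix.det_fin_three, Basis.toMatrix_apply, he, hx, hy, h2, hκ0]
  · refine h.basis.is_basis_iff_det.mpr (isUnit_iff_ne_zero.mpr ?_)
    rw [hEE, hEX, hEY]
    convert mul_ne_zero (mul_ne_zero (mul_ne_zero (mul_ne_zero h2 h2) h2) hρ2) hκ0 using 1
    simp [Basis.det_apply, Matrix.det_fin_three, Basis.toMatrix_apply, he, hx, hy]
    ring

end IsCAlg

/-- Over a field of characteristic `≠ 2`, for `ρ ≠ 0`, `ρ ≠ -2`,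
the algebras `C(ρ) = C(ρ, ρ, ρ)` and `J₂ = C(1, 0, 0)` are isotopic. -/
theorem stmt14 {F : Type*} [Field F] (hchar : (2 : F) ≠ 0)
    (ρ : F) (hρ0 : ρ ≠ 0) (hρ2 : ρ ≠ -2)
    {A : Type*} [AddCommGroup A] [Module F A]
    (m : A →ₗ[F] A →ₗ[F] A) (e x y : A)
    (hA : IsCAlg F m ρ ρ ρ e x y)
    {B : Type*} [AddCommGroup B] [Module F B]
    (m' : B →ₗ[F] B →ₗ[F] B) (e' x' y' : B)
    (hB : IsCAlg F m' 1 0 0 e' x' y') :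
    Isotopic F (fun u v : A => m u v) (fun u v : B => m' u v) := by
  have hρ2' : ρ + 2 ≠ 0 := fun h => hρ2 (eq_neg_of_add_eq_zero_left h)
  exact (hA.isJordanFrame_of_const hchar hρ0 hρ2').isotopic hB.isJordanFrame_of_one_zero_zero
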